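/- arXiv:0802.0323 — 3 statements merged into one kernel-verified Lean document; each statement's English description precedes it below -/
import Mathlib

section
/- Let θ ∈ L²(-π,π), and suppose the function y(x) = (1/sin x)·∫₀ˣ θ(t) dt lies in L²(-π,π). Then ∫_{-π}^{0} θ(t) dt = 0 and ∫_{0}^{π} θ(t) dt = 0. -/
/-!
Let `F x = ∫₀ˣ θ`, continuous on `[-π, π]` because `θ ∈ L² ⊆ L¹` there. Near a zero `c = ±π` of
`sin` we have `|sin x| ≤ |x - c|`, so if `F c ≠ 0` then `|y x| = |F x / sin x|` dominates a
multiple of `|x - c|⁻¹`, which is not integrable on either side of `c`. As `y ∈ L² ⊆ L¹`, this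
forces `F π = ∫₀^π θ = 0` and `F (-π) = -∫_{-π}^0 θ = 0`.
-/

open Real MeasureTheory Set Filter Topology Asymptotics Interval

theorem not_intervalIntegrable_of_sub_inv_isBigO_nhdsWithin_diff_singleton
    {F : Type*} [NormedAddCommGroup F] {f : ℝ → F} {a b c : ℝ}
    (hf : (fun x => (x - c)⁻¹) =O[𝓝[[[a, b]] \ {c}] c] f) (hne : a ≠ b) (hc : c ∈ [[a, b]]) :
    ¬IntervalIntegrable f volume a b := by
  have hle : 𝓝[[[a, b]] \ {c}] c ≤ 𝓝[≠] c := nhdsWithin_mono _ inter_subset_right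
  have hlog : ∀ᶠ x in 𝓝[≠] c, HasDerivAt (fun x => Real.log (x - c)) (x - c)⁻¹ x := by
    filter_upwards [self_mem_nhdsWithin] with x hx
    simpa using ((hasDerivAt_id x).sub_const c).log (sub_ne_zero.2 hx)
  have hlog_infty : Tendsto (fun x => ‖Real.log (x - c)‖) (𝓝[≠] c) atTop := by
    refine tendsto_abs_atBot_atTop.comp (Real.tendsto_log_nhdsNE_zero.comp ?_)
    rw [← sub_self c]
    exact ((hasDerivAt_id c).sub_const c).tendsto_nhdsNE one_ne_zero
  exact not_intervalIntegrable_of_tendsto_norm_atTop_of_deriv_isBigO_within_sdiff_singleton hne hc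
    ((hlog.mono fun x hx => hx.differentiableAt).filter_mono hle) (hlog_infty.mono_left hle)
    (hf.congr' ((hlog.filter_mono hle).mono fun x hx => hx.deriv.symm) EventuallyEq.rfl)

theorem not_intervalIntegrable_inv_smul_of_ne_zero
    {E : Type*} [NormedAddCommGroup E] [NormedSpace ℝ E] {h : ℝ → ℝ} {g : ℝ → E} {a b c : ℝ}
    (hh : (fun x => (x - c)⁻¹) =O[𝓝[≠] c] fun x => (h x)⁻¹)
    (hg : ContinuousWithinAt g [[a, b]] c) (hgc : g c ≠ 0) (hne : a ≠ b) (hc : c ∈ [[a, b]]) :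
    ¬IntervalIntegrable (fun x => (h x)⁻¹ • g x) volume a b := by
  have hle : 𝓝[[[a, b]] \ {c}] c ≤ 𝓝[≠] c := nhdsWithin_mono _ inter_subset_right
  have hg_tendsto : Tendsto g (𝓝[[[a, b]] \ {c}] c) (𝓝 (g c)) := (hg.mono sdiff_subset).tendsto
  have one_isBigO : (fun _ => (1 : ℝ)) =O[𝓝[[[a, b]] \ {c}] c] g :=
    (isBigO_const_left_iff_pos_le_norm one_ne_zero).2 ⟨‖g c‖ / 2, by positivity,
      hg_tendsto.norm.eventually (eventually_ge_nhds (half_lt_self (norm_pos_iff.2 hgc)))⟩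
  refine not_intervalIntegrable_of_sub_inv_isBigO_nhdsWithin_diff_singleton ?_ hne hc
  simpa using (hh.mono hle).smul one_isBigO

theorem Real.isBigO_sub_inv_sin_inv {c : ℝ} (hc : sin c = 0) :
    (fun x => (x - c)⁻¹) =O[𝓝 c] fun x => (sin x)⁻¹ := by
  have hsin : sin =O[𝓝 c] fun x => x - c :=
    IsBigO.of_bound 1 <| Eventually.of_forall fun x => by
      simpa [hc] using abs_sin_sub_sin_le x c
  refine hsin.inv_rev ?_
  filter_upwards [Metric.ball_mem_nhds c pi_pos] with x hx hx0
  have hdist : |x - c| < π := hx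
  rw [← sin_eq_zero_iff_of_lt_of_lt (by linarith [neg_abs_le (x - c)])
    (lt_of_le_of_lt (le_abs_self _) hdist), sin_sub, hx0, hc]
  ring

theorem intervalIntegral_eq_zero_of_intervalIntegrable_inv_sin_mul_primitive {θ : ℝ → ℝ}
    {a c : ℝ} (hc : sin c = 0) (hac : a ≠ c) (hθ : IntervalIntegrable θ volume a c)
    (hy : IntervalIntegrable (fun x => (sin x)⁻¹ * ∫ t in a..x, θ t) volume a c) :
    ∫ t in a..c, θ t = 0 := by
  by_contra hne
  exact not_intervalIntegrable_inv_smul_of_ne_zero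
    ((isBigO_sub_inv_sin_inv hc).mono nhdsWithin_le_nhds)
    (intervalIntegral.continuousOn_primitive_interval' hθ left_mem_uIcc c right_mem_uIcc)
    hne hac right_mem_uIcc hy

theorem MeasureTheory.MemLp.intervalIntegrable {E : Type*} [NormedAddCommGroup E] {f : ℝ → E}
    {p : ENNReal} (hp : 1 ≤ p) {a b : ℝ}
    (hab : a ≤ b) (hf : MemLp f p (volume.restrict (Ioo a b))) :
    IntervalIntegrable f volume a b :=
  (intervalIntegrable_iff_integrableOn_Ioo_of_le hab).2 (hf.integrable hp)

/-- If `θ ∈ L²(-π,π)` and `y x = (sin x)⁻¹ ∫₀ˣ θ ∈ L²(-π,π)`, then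
`∫_{-π}^0 θ = 0` and `∫_0^π θ = 0`. -/
theorem stmt_3 (θ : ℝ → ℝ)
    (hθ : MemLp θ 2 (volume.restrict (Ioo (-π) π)))
    (hy : MemLp (fun x => (Real.sin x)⁻¹ * ∫ t in (0:ℝ)..x, θ t) 2
      (volume.restrict (Ioo (-π) π))) :
    (∫ t in (-π)..(0:ℝ), θ t) = 0 ∧ (∫ t in (0:ℝ)..π, θ t) = 0 := by
  have hpi : -π ≤ π := by linarith [pi_pos]
  have hθI := hθ.intervalIntegrable (by norm_num) hpi
  have hyI := hy.intervalIntegrable (by norm_num) hpi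
  have hleft : [[(0 : ℝ), -π]] ⊆ [[-π, π]] := uIcc_subset_uIcc (by simp [pi_pos.le]) left_mem_uIcc
  have hright : [[(0 : ℝ), π]] ⊆ [[-π, π]] := uIcc_subset_uIcc (by simp [pi_pos.le]) right_mem_uIcc
  refine ⟨?_, ?_⟩
  · have h := intervalIntegral_eq_zero_of_intervalIntegrable_inv_sin_mul_primitive (by simp)
      (by simp [pi_ne_zero]) (hθI.mono_set hleft) (hyI.mono_set hleft)
    rwa [intervalIntegral.integral_symm, neg_eq_zero] at h
  · exact intervalIntegral_eq_zero_of_intervalIntegrable_inv_sin_mul_primitive sin_pi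
      pi_ne_zero.symm (hθI.mono_set hright) (hyI.mono_set hright)
end

section
/- Fix 0 < ε < 2. Let φ ∈ L²(0,π) and define for x ∈ (0,π): g(x) = (tan(x/2))^{-1/ε} · (sin x)^{-1} · ∫₀ˣ (tan(t/2))^{1/ε} φ(t) dt. Then |g(x)| ≤ x^{-1/2}·β(x) for x near 0, where β(x) → 0 as x → 0⁺; in particular g is integrable near 0 and x ↦ ∫₀ˣ g(τ) dτ is continuous at 0 with |∫₀ˣ g| ≤ γ(x)·x^{1/2} for some γ(x) → 0. -/
/-!
The weight `tan (t / 2) ^ q` is increasing, so inside `∫₀ˣ` it is at most its value at `x`,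
which cancels the prefactor `tan (x / 2) ^ (-q)`. Cauchy–Schwarz then gives
`|g x| ≤ √x ‖φ‖_{L²(0,x)} / sin x = β x / √x` with `β x = x ‖φ‖_{L²(0,x)} / sin x → 0`.
Since `x / sin x` increases on `(0, π)`, `β` is monotone, so `|g τ| ≤ β x / √τ` on `(0, x)`,
and integrating `τ ^ (-1/2)` yields `|∫₀ˣ g| ≤ 2 β x √x`.
-/

open Real MeasureTheory Set Filter Topology

theorem integral_abs_le_sqrt_mul_sqrt {α : Type*} [MeasurableSpace α] {μ : Measure α}
    [IsFiniteMeasure μ] {φ : α → ℝ} (hφ : MemLp φ 2 μ) :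
    ∫ a, |φ a| ∂μ ≤ √(μ.real univ) * √(∫ a, φ a ^ 2 ∂μ) := by
  have h := integral_mul_le_Lp_mul_Lq_of_nonneg (μ := μ) Real.HolderConjugate.two_two
    (f := fun _ => (1 : ℝ)) (g := fun a => |φ a|) (ae_of_all _ fun _ => zero_le_one)
    (ae_of_all _ fun _ => abs_nonneg _) (by simpa using memLp_const (1 : ℝ))
    (by rw [ENNReal.ofReal_ofNat]; exact hφ.abs)
  have hsq : ∀ a, |φ a| ^ (2 : ℝ) = φ a ^ 2 := fun a => by rw [rpow_two, sq_abs]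
  simp only [one_mul, one_rpow, integral_const, smul_eq_mul, mul_one, hsq] at h
  rwa [sqrt_eq_rpow, sqrt_eq_rpow]

theorem tendsto_setIntegral_Ioc_nhdsGT_zero {f : ℝ → ℝ} {a : ℝ} (ha : 0 < a)
    (hf : IntegrableOn f (Ioc 0 a)) :
    Tendsto (fun x => ∫ t in Ioc 0 x, f t) (𝓝[>] 0) (𝓝 0) := by
  have hf' : IntegrableOn f (Icc 0 a) := by
    rwa [integrableOn_Icc_iff_integrableOn_Ioc]
  have hcont := intervalIntegral.continuousOn_primitive hf'
  have h := (hcont 0 (left_mem_Icc.2 ha.le)).tendsto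
  rw [Ioc_self, Measure.restrict_empty, integral_zero_measure] at h
  refine h.mono_left ?_
  rw [← nhdsWithin_Ioc_eq_nhdsGT ha]
  exact nhdsWithin_mono _ Ioc_subset_Icc_self

theorem mul_sin_le_mul_sin {τ x : ℝ} (hτ : 0 < τ) (hτx : τ ≤ x) (hx : x ≤ π) :
    τ * sin x ≤ x * sin τ := by
  have hx0 : 0 < x := hτ.trans_le hτx
  have h := strictConcaveOn_sin_Icc.concaveOn.2 (left_mem_Icc.2 pi_pos.le) ⟨hx0.le, hx⟩
    (sub_nonneg.2 ((div_le_one hx0).2 hτx)) (div_nonneg hτ.le hx0.le) (sub_add_cancel 1 (τ / x))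
  simp only [smul_eq_mul, mul_zero, sin_zero, zero_add, div_mul_cancel₀ _ hx0.ne'] at h
  rwa [div_mul_eq_mul_div, div_le_iff₀ hx0, mul_comm (sin τ)] at h

theorem Real.measurable_tan : Measurable tan := by
  rw [show tan = fun x => sin x / cos x from funext tan_eq_sin_div_cos]
  fun_prop

theorem norm_tan_half_rpow_mul_le {q t x : ℝ} (hq : 0 ≤ q) (ht : t ∈ Ioc 0 x) (hx : x < π)
    (c : ℝ) : ‖tan (t / 2) ^ q * c‖ ≤ tan (x / 2) ^ q * |c| := by
  have htan : 0 < tan (t / 2) := tan_pos_of_pos_of_lt_pi_div_two (by linarith [ht.1])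
    (by linarith [ht.2])
  have hmono : tan (t / 2) ≤ tan (x / 2) :=
    strictMonoOn_tan.monotoneOn ⟨by linarith [ht.1, pi_pos], by linarith [ht.2]⟩
      ⟨by linarith [ht.1, ht.2, pi_pos], by linarith⟩ (by linarith [ht.2])
  rw [norm_mul, norm_of_nonneg (rpow_nonneg htan.le q), norm_eq_abs]
  gcongr

theorem integrableOn_tan_half_rpow_mul {q x : ℝ} {φ : ℝ → ℝ} (hq : 0 ≤ q) (hx : x < π)
    (hφ : IntegrableOn φ (Ioc 0 x)) :
    IntegrableOn (fun t => tan (t / 2) ^ q * φ t) (Ioc 0 x) :=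
  (hφ.abs.const_mul _).mono'
    ((Real.measurable_tan.comp (measurable_id.div_const 2)).pow_const q
      |>.aestronglyMeasurable.mul hφ.1)
    ((ae_restrict_iff' measurableSet_Ioc).2 <| ae_of_all _ fun t ht =>
      norm_tan_half_rpow_mul_le hq ht hx (φ t))

noncomputable def l2Modulus (φ : ℝ → ℝ) (x : ℝ) : ℝ :=
  x * √(∫ t in Ioc 0 x, φ t ^ 2) / sin x

theorem l2Modulus_le_l2Modulus {φ : ℝ → ℝ} {τ x : ℝ} (hτ : 0 < τ) (hτx : τ ≤ x) (hx : x < π)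
    (hφ : IntegrableOn (fun t => φ t ^ 2) (Ioc 0 x)) : l2Modulus φ τ ≤ l2Modulus φ x := by
  have hsinτ : 0 < sin τ := sin_pos_of_pos_of_lt_pi hτ (hτx.trans_lt hx)
  have hsinx : 0 < sin x := sin_pos_of_pos_of_lt_pi (hτ.trans_le hτx) hx
  have hratio : τ / sin τ ≤ x / sin x := by
    rw [div_le_div_iff₀ hsinτ hsinx]
    exact mul_sin_le_mul_sin hτ hτx hx.le
  have hsq : ∫ t in Ioc 0 τ, φ t ^ 2 ≤ ∫ t in Ioc 0 x, φ t ^ 2 :=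
    setIntegral_mono_set hφ (ae_of_all _ fun _ => sq_nonneg _)
      (Ioc_subset_Ioc_right hτx).eventuallyLE
  simp only [l2Modulus, mul_div_right_comm]
  exact mul_le_mul hratio (sqrt_le_sqrt hsq) (sqrt_nonneg _)
    (div_pos (hτ.trans_le hτx) hsinx).le

theorem tendsto_l2Modulus {φ : ℝ → ℝ} {a : ℝ} (ha : 0 < a)
    (hφ : IntegrableOn (fun t => φ t ^ 2) (Ioc 0 a)) :
    Tendsto (l2Modulus φ) (𝓝[>] 0) (𝓝 0) := by
  have hsinc : Tendsto (fun x => (sinc x)⁻¹) (𝓝[>] 0) (𝓝 1) := by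
    simpa using ((continuous_sinc.tendsto 0).inv₀ (by simp)).mono_left nhdsWithin_le_nhds
  have hsqrt := (continuous_sqrt.tendsto 0).comp (tendsto_setIntegral_Ioc_nhdsGT_zero ha hφ)
  rw [sqrt_zero] at hsqrt
  have hprod : Tendsto (fun x => (sinc x)⁻¹ * √(∫ t in Ioc 0 x, φ t ^ 2)) (𝓝[>] 0) (𝓝 0) := by
    simpa using hsinc.mul hsqrt
  refine hprod.congr' ?_
  filter_upwards [self_mem_nhdsWithin] with x hx
  simp only [l2Modulus, sinc_of_ne_zero (ne_of_gt hx), inv_div]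
  ring

noncomputable def halfTanTransform (q : ℝ) (φ : ℝ → ℝ) (x : ℝ) : ℝ :=
  tan (x / 2) ^ (-q) * (sin x)⁻¹ * ∫ t in 0..x, tan (t / 2) ^ q * φ t

theorem abs_halfTanTransform_le {q x : ℝ} {φ : ℝ → ℝ} (hq : 0 ≤ q) (hx : x ∈ Ioo 0 π)
    (hφ : MemLp φ 2 (volume.restrict (Ioc 0 x))) :
    |halfTanTransform q φ x| ≤ l2Modulus φ x / √x := by
  obtain ⟨hx0, hxπ⟩ := hx
  have htan : 0 < tan (x / 2) := tan_pos_of_pos_of_lt_pi_div_two (by linarith) (by linarith)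
  set T := tan (x / 2) ^ q
  have hT : 0 < T := rpow_pos_of_pos htan q
  have hsin : 0 < sin x := sin_pos_of_pos_of_lt_pi hx0 hxπ
  have hφint : IntegrableOn φ (Ioc 0 x) := hφ.integrable one_le_two
  have hweighted : |∫ t in 0..x, tan (t / 2) ^ q * φ t| ≤
      T * (√x * √(∫ t in Ioc 0 x, φ t ^ 2)) := by
    rw [intervalIntegral.integral_of_le hx0.le]
    calc _ ≤ ∫ t in Ioc 0 x, T * |φ t| := norm_integral_le_of_norm_le
            (hφint.abs.const_mul T) ((ae_restrict_iff' measurableSet_Ioc).2 <|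
              ae_of_all _ fun t ht => norm_tan_half_rpow_mul_le hq ht hxπ (φ t))
      _ ≤ _ := by
        have hvol : (volume.restrict (Ioc 0 x)).real univ = x := by simp [hx0.le]
        have hCS := integral_abs_le_sqrt_mul_sqrt hφ
        rw [hvol] at hCS
        rw [integral_const_mul]
        exact mul_le_mul_of_nonneg_left hCS hT.le
  calc |halfTanTransform q φ x|
      = T⁻¹ * (sin x)⁻¹ * |∫ t in 0..x, tan (t / 2) ^ q * φ t| := by
        rw [halfTanTransform, rpow_neg htan.le, abs_mul, abs_of_pos (by positivity)]
    _ ≤ T⁻¹ * (sin x)⁻¹ * (T * (√x * √(∫ t in Ioc 0 x, φ t ^ 2))) := by gcongr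
    _ = l2Modulus φ x / √x := by
        rw [l2Modulus]
        field_simp
        rw [sq_sqrt hx0.le, mul_comm]

theorem aestronglyMeasurable_halfTanTransform {q x : ℝ} {φ : ℝ → ℝ} (hq : 0 ≤ q)
    (hx : x ∈ Ioo 0 π) (hφ : IntegrableOn φ (Ioc 0 x)) :
    AEStronglyMeasurable (halfTanTransform q φ) (volume.restrict (Ioo 0 x)) := by
  have hweight : IntegrableOn (fun t => tan (t / 2) ^ q * φ t) (uIcc 0 x) := by
    rw [uIcc_of_le hx.1.le, integrableOn_Icc_iff_integrableOn_Ioc]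
    exact integrableOn_tan_half_rpow_mul hq hx.2 hφ
  have hprimitive := intervalIntegral.continuousOn_primitive_interval hweight
  rw [uIcc_of_le hx.1.le] at hprimitive
  have hfactor : Measurable fun y => tan (y / 2) ^ (-q) * (sin y)⁻¹ :=
    ((Real.measurable_tan.comp (measurable_id.div_const 2)).pow_const _).mul
      measurable_sin.inv
  exact hfactor.aestronglyMeasurable.mul
    ((hprimitive.mono Ioo_subset_Icc_self).aestronglyMeasurable measurableSet_Ioo)

theorem inv_sqrt_eq_rpow {τ : ℝ} (hτ : 0 ≤ τ) : (√τ)⁻¹ = τ ^ (-(1 / 2) : ℝ) := by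
  rw [sqrt_eq_rpow, rpow_neg hτ]

theorem intervalIntegrable_inv_sqrt {x : ℝ} (hx : 0 ≤ x) :
    IntervalIntegrable (fun τ => (√τ)⁻¹) volume 0 x := by
  refine (intervalIntegral.intervalIntegrable_rpow' (r := -(1 / 2)) (by norm_num)).congr_ae ?_
  rw [uIoc_of_le hx]
  exact ae_restrict_of_forall_mem measurableSet_Ioc fun τ hτ => (inv_sqrt_eq_rpow hτ.1.le).symm

theorem integral_inv_sqrt {x : ℝ} (hx : 0 ≤ x) : ∫ τ in 0..x, (√τ)⁻¹ = 2 * √x := by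
  rw [intervalIntegral.integral_congr (g := fun τ => τ ^ (-(1 / 2) : ℝ)) fun τ hτ =>
    inv_sqrt_eq_rpow (by rw [uIcc_of_le hx] at hτ; exact hτ.1),
    integral_rpow (Or.inl (by norm_num)), sqrt_eq_rpow]
  norm_num
  ring

theorem integrableOn_Ioo_of_abs_le_div_sqrt {f : ℝ → ℝ} {C x : ℝ}
    (hf : AEStronglyMeasurable f (volume.restrict (Ioo 0 x)))
    (h : ∀ τ ∈ Ioo 0 x, |f τ| ≤ C / √τ) : IntegrableOn f (Ioo 0 x) := by
  rcases lt_or_ge x 0 with hx | hx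
  · simp [Ioo_eq_empty_of_le hx.le]
  have hmajorant : IntegrableOn (fun τ => C * (√τ)⁻¹) (Ioo 0 x) :=
    ((intervalIntegrable_inv_sqrt hx).1.mono_set Ioo_subset_Ioc_self).const_mul C
  exact hmajorant.mono' hf (ae_restrict_of_forall_mem measurableSet_Ioo h)

theorem abs_intervalIntegral_le_of_abs_le_div_sqrt {f : ℝ → ℝ} {C x : ℝ} (hx : 0 ≤ x)
    (h : ∀ τ ∈ Ioo 0 x, |f τ| ≤ C / √τ) : |∫ τ in 0..x, f τ| ≤ 2 * C * √x := by
  have hbound : ∀ᵐ τ, τ ∈ Ioc 0 x → ‖f τ‖ ≤ C * (√τ)⁻¹ := by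
    filter_upwards [measure_singleton x |> compl_mem_ae_iff.2] with τ hτx hτ
    exact h τ ⟨hτ.1, lt_of_le_of_ne hτ.2 hτx⟩
  calc |∫ τ in 0..x, f τ| ≤ ∫ τ in 0..x, C * (√τ)⁻¹ :=
        intervalIntegral.norm_integral_le_of_norm_le hx hbound
          ((intervalIntegrable_inv_sqrt hx).const_mul C)
    _ = 2 * C * √x := by rw [intervalIntegral.integral_const_mul, integral_inv_sqrt hx]; ring

/-- For `0 < ε < 2`, `φ ∈ L²(0,π)` and
`g x = tan(x/2)^{-1/ε} (sin x)⁻¹ ∫₀ˣ tan(t/2)^{1/ε} φ t dt`, one has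
`|g x| ≤ β(x)/√x` with `β → 0` at `0⁺`, `g` is integrable near `0`, and
`|∫₀ˣ g| ≤ γ(x)·√x` with `γ → 0` at `0⁺`. -/
theorem stmt_4 (ε : ℝ) (hε : 0 < ε ∧ ε < 2) (φ : ℝ → ℝ)
    (hφ : MemLp φ 2 (volume.restrict (Ioo (0:ℝ) π)))
    (g : ℝ → ℝ)
    (hg : ∀ x ∈ Ioo (0:ℝ) π,
      g x = (Real.tan (x/2)) ^ (-(1/ε) : ℝ) * (Real.sin x)⁻¹ *
        ∫ t in (0:ℝ)..x, (Real.tan (t/2)) ^ ((1/ε) : ℝ) * φ t) :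
    ∃ β γ : ℝ → ℝ,
      Tendsto β (nhdsWithin 0 (Ioi 0)) (nhds 0) ∧
      Tendsto γ (nhdsWithin 0 (Ioi 0)) (nhds 0) ∧
      ∀ x ∈ Ioo (0:ℝ) π,
        |g x| ≤ β x / Real.sqrt x ∧
        IntegrableOn g (Ioo 0 x) ∧
        |∫ τ in (0:ℝ)..x, g τ| ≤ γ x * Real.sqrt x := by
  have hq : 0 ≤ 1 / ε := one_div_nonneg.2 hε.1.le
  have hφIoc : ∀ x ∈ Ioo 0 π, MemLp φ 2 (volume.restrict (Ioc 0 x)) := fun x hx =>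
    hφ.mono_measure (Measure.restrict_mono (Ioc_subset_Ioo_right hx.2) le_rfl)
  have hβ : Tendsto (l2Modulus φ) (𝓝[>] 0) (𝓝 0) :=
    tendsto_l2Modulus one_pos (hφIoc 1 ⟨one_pos, by linarith [pi_gt_three]⟩).integrable_sq
  refine ⟨l2Modulus φ, fun x => 2 * l2Modulus φ x, hβ, by simpa using hβ.const_mul 2,
    fun x hx => ?_⟩
  have hg_le : ∀ τ ∈ Ioo 0 x, |g τ| ≤ l2Modulus φ x / √τ := fun τ hτ => by
    have hτπ : τ ∈ Ioo 0 π := ⟨hτ.1, hτ.2.trans hx.2⟩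
    rw [hg τ hτπ]
    exact (abs_halfTanTransform_le hq hτπ (hφIoc τ hτπ)).trans <| div_le_div_of_nonneg_right
      (l2Modulus_le_l2Modulus hτ.1 hτ.2.le hx.2 (hφIoc x hx).integrable_sq) (sqrt_nonneg τ)
  have hg_meas : AEStronglyMeasurable g (volume.restrict (Ioo 0 x)) :=
    (aestronglyMeasurable_halfTanTransform hq hx ((hφIoc x hx).integrable one_le_two)).congr <|
      (ae_restrict_iff' measurableSet_Ioo).2 <| ae_of_all _ fun τ hτ =>
        (hg τ ⟨hτ.1, hτ.2.trans hx.2⟩).symm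
  refine ⟨?_, integrableOn_Ioo_of_abs_le_div_sqrt hg_meas hg_le, ?_⟩
  · rw [hg x hx]
    exact abs_halfTanTransform_le hq hx (hφIoc x hx)
  · exact abs_intervalIntegral_le_of_abs_le_div_sqrt hx.1.le hg_le
end

section
/- Fix 0 < ε < 2. Let B be the operator on L²(-π,π) defined by (By)(x) = sin(x)·y'(x) with natural domain {y ∈ L² : y locally absolutely continuous on each of (-π,0) and (0,π), sin·y' ∈ L²}, and A the operator (Ay)(x) = (sin(x)·y(x))' with natural domain. Then D(A) = D(B) and A* = -B. -/
/-!
Away from the zeros of `sin` the two derivatives determine each other through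
`(sin y)' = cos y + sin y'`, and `cos y ∈ L²`, so the domains agree. For the adjoint relation,
`F = sin y z` has derivative `(sin y)' z + y (sin z')`, which is integrable as a sum of products of
`L²` functions, so `F` has limits at `-π, 0, π`. Each limit vanishes: `y z` is integrable, while
`F = sin · y z` with `sin x = O(x - c)` at a zero `c` would force `(x - c)⁻¹ = O(y z)` if the limit
were nonzero.
-/

open Real MeasureTheory Set Filter Topology Asymptotics intervalIntegral

theorem hasDerivAt_of_hasDerivAt_mul {w y : ℝ → ℝ} {x w' h : ℝ} (hw : HasDerivAt w w' x)
    (hx : w x ≠ 0) (hwy : HasDerivAt (fun t => w t * y t) h x) :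
    HasDerivAt y ((h - w' * y x) / w x) x := by
  have hev : (fun t => w t * y t / w t) =ᶠ[𝓝 x] y := by
    filter_upwards [hw.continuousAt.eventually_ne hx] with t ht
    field_simp
  refine ((hwy.div hw hx).congr_of_eventuallyEq hev.symm).congr_deriv ?_
  field_simp

theorem memLp_cos_mul {μ : Measure ℝ} {p : ENNReal} {y : ℝ → ℝ} (hy : MemLp y p μ) :
    MemLp (fun x => cos x * y x) p μ :=
  hy.of_le_mul (c := 1) (continuous_cos.aestronglyMeasurable.mul hy.1) (ae_of_all _ fun x => by
    simpa [abs_mul] using mul_le_mul_of_nonneg_right (abs_cos_le_one x) (abs_nonneg (y x)))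

theorem ae_sin_ne_zero : ∀ᵐ x ∂(volume : Measure ℝ), sin x ≠ 0 :=
  ((countable_range fun n : ℤ => (n : ℝ) * π).ae_notMem volume).mono
    fun _ hx hsin => hx (sin_eq_zero_iff.1 hsin)

theorem exists_hasDerivAt_and_memLp_sin_mul {y h : ℝ → ℝ}
    (hy : MemLp y 2 (volume.restrict (Ioo (-π) π)))
    (hd : ∀ x ∈ Ioo (-π) π, x ≠ 0 → HasDerivAt (fun t => sin t * y t) (h x) x)
    (hh : MemLp h 2 (volume.restrict (Ioo (-π) π))) :
    ∃ g : ℝ → ℝ, (∀ x ∈ Ioo (-π) π, x ≠ 0 → HasDerivAt y (g x) x) ∧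
      MemLp (fun x => sin x * g x) 2 (volume.restrict (Ioo (-π) π)) := by
  refine ⟨fun x => (h x - cos x * y x) / sin x, fun x hx hx0 => ?_,
    (hh.sub (memLp_cos_mul hy)).ae_eq ?_⟩
  · exact hasDerivAt_of_hasDerivAt_mul (hasDerivAt_sin x)
      (fun h0 => hx0 ((sin_eq_zero_iff_of_lt_of_lt hx.1 hx.2).1 h0)) (hd x hx hx0)
  · filter_upwards [ae_restrict_of_ae ae_sin_ne_zero] with x hx
    simp only [Pi.sub_apply]
    field_simp

theorem not_integrableOn_of_sub_inv_isBigO {l : Filter ℝ} [NeBot l] [TendstoIxxClass Icc l l]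
    {c : ℝ} {s : Set ℝ} {g : ℝ → ℝ} (hl : l ≤ 𝓝[≠] c) (hs : s ∈ l)
    (hg : (fun x => (x - c)⁻¹) =O[l] g) : ¬IntegrableOn g s := by
  have hderiv : ∀ᶠ x in l, HasDerivAt (fun x => log (x - c)) (x - c)⁻¹ x := by
    filter_upwards [hl self_mem_nhdsWithin] with x hx
    simpa using ((hasDerivAt_id x).sub_const c).log (sub_ne_zero.2 hx)
  have hlog : Tendsto (fun x => ‖log (x - c)‖) l atTop := by
    refine (tendsto_abs_atBot_atTop.comp (tendsto_log_nhdsNE_zero.comp ?_)).mono_left hl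
    rw [← sub_self c]
    exact ((hasDerivAt_id c).sub_const c).tendsto_nhdsNE one_ne_zero
  exact not_integrableOn_of_tendsto_norm_atTop_of_deriv_isBigO_filter l hs
    (hderiv.mono fun x hx => hx.differentiableAt) hlog
    (hg.congr' (hderiv.mono fun x hx => hx.deriv.symm) EventuallyEq.rfl)

theorem eq_zero_of_tendsto_mul_of_isBigO {l : Filter ℝ} [NeBot l] [TendstoIxxClass Icc l l]
    {c L : ℝ} {s : Set ℝ} {w u : ℝ → ℝ} (hl : l ≤ 𝓝[≠] c) (hs : s ∈ l)
    (hu : IntegrableOn u s) (hw : w =O[l] fun x => x - c)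
    (hL : Tendsto (fun x => w x * u x) l (𝓝 L)) : L = 0 := by
  by_contra hL0
  have hwu : (fun _ => (1 : ℝ)) =O[l] fun x => w x * u x :=
    (isBigO_const_left_iff_pos_le_norm one_ne_zero).2 ⟨‖L‖ / 2, by positivity,
      hL.norm.eventually (eventually_ge_nhds (half_lt_self (norm_pos_iff.2 hL0)))⟩
  have hinv_w : (fun x => (x - c)⁻¹ * w x) =O[l] fun _ => (1 : ℝ) := by
    refine ((isBigO_refl (fun x => (x - c)⁻¹) l).mul hw).congr' EventuallyEq.rfl ?_
    filter_upwards [hl self_mem_nhdsWithin] with x hx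
    exact inv_mul_cancel₀ (sub_ne_zero.2 hx)
  have hinv : (fun x => (x - c)⁻¹) =O[l] u :=
    calc (fun x => (x - c)⁻¹) = fun x => (x - c)⁻¹ * 1 := by simp
      _ =O[l] fun x => (x - c)⁻¹ * (w x * u x) := (isBigO_refl _ l).mul hwu
      _ = fun x => ((x - c)⁻¹ * w x) * u x := by simp only [mul_assoc]
      _ =O[l] fun x => 1 * u x := hinv_w.mul (isBigO_refl u l)
      _ = u := by simp
  exact not_integrableOn_of_sub_inv_isBigO hl hs hinv hu

theorem exists_tendsto_of_hasDerivAt_of_intervalIntegrable {a b : ℝ} {F F' : ℝ → ℝ}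
    (hab : a < b) (hF : ∀ x ∈ Ioo a b, HasDerivAt F (F' x) x)
    (hF' : IntervalIntegrable F' volume a b) :
    ∃ La Lb, Tendsto F (𝓝[>] a) (𝓝 La) ∧ Tendsto F (𝓝[<] b) (𝓝 Lb) := by
  obtain ⟨m, hm⟩ : (Ioo a b).Nonempty := nonempty_Ioo.2 hab
  set G : ℝ → ℝ := fun x => F m + ∫ t in m..x, F' t
  have hG : ContinuousOn G (Icc a b) := by
    have hm' : m ∈ uIcc a b := by rw [uIcc_of_le hab.le]; exact Ioo_subset_Icc_self hm
    rw [← uIcc_of_le hab.le]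
    exact continuousOn_const.add (continuousOn_primitive_interval' hF' hm')
  have hFG : EqOn F G (Ioo a b) := fun x hx => by
    have hsub : uIcc m x ⊆ Ioo a b := ordConnected_Ioo.uIcc_subset hm hx
    have hint : IntervalIntegrable F' volume m x :=
      hF'.mono_set (by rw [uIcc_of_le hab.le]; exact hsub.trans Ioo_subset_Icc_self)
    simp only [G, integral_eq_sub_of_hasDerivAt (fun t ht => hF t (hsub ht)) hint]
    ring
  refine ⟨G a, G b, ?_, ?_⟩
  · refine ((hG a (left_mem_Icc.2 hab.le)).tendsto.mono_left ?_).congr'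
      (eventuallyEq_of_mem (Ioo_mem_nhdsGT hab) hFG).symm
    rw [← nhdsWithin_Ioo_eq_nhdsGT hab]
    exact nhdsWithin_mono _ Ioo_subset_Icc_self
  · refine ((hG b (right_mem_Icc.2 hab.le)).tendsto.mono_left ?_).congr'
      (eventuallyEq_of_mem (Ioo_mem_nhdsLT hab) hFG).symm
    rw [← nhdsWithin_Ioo_eq_nhdsLT hab]
    exact nhdsWithin_mono _ Ioo_subset_Icc_self

theorem integral_eq_zero_of_hasDerivAt_mul {a b : ℝ} {w u φ : ℝ → ℝ} (hab : a < b)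
    (hderiv : ∀ x ∈ Ioo a b, HasDerivAt (fun t => w t * u t) (φ x) x)
    (hφ : IntervalIntegrable φ volume a b) (hu : IntegrableOn u (Ioo a b))
    (hwa : w =O[𝓝[>] a] fun x => x - a) (hwb : w =O[𝓝[<] b] fun x => x - b) :
    ∫ x in a..b, φ x = 0 := by
  obtain ⟨La, Lb, ha, hb⟩ := exists_tendsto_of_hasDerivAt_of_intervalIntegrable hab hderiv hφ
  have hLa : La = 0 := eq_zero_of_tendsto_mul_of_isBigO
    (nhdsGT_le_nhdsNE a) (Ioo_mem_nhdsGT hab) hu hwa ha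
  have hLb : Lb = 0 := eq_zero_of_tendsto_mul_of_isBigO
    (nhdsLT_le_nhdsNE b) (Ioo_mem_nhdsLT hab) hu hwb hb
  rw [integral_eq_sub_of_hasDerivAt_of_tendsto hab hderiv hφ ha hb, hLa, hLb, sub_zero]

theorem integral_deriv_mul_add_mul_deriv_eq_zero {a b : ℝ} {w y z h g : ℝ → ℝ} (hab : a < b)
    (hwa : DifferentiableAt ℝ w a) (hwa₀ : w a = 0)
    (hwb : DifferentiableAt ℝ w b) (hwb₀ : w b = 0)
    (hy : MemLp y 2 (volume.restrict (Ioo a b))) (hz : MemLp z 2 (volume.restrict (Ioo a b)))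
    (hh : MemLp h 2 (volume.restrict (Ioo a b)))
    (hg : MemLp (fun x => w x * g x) 2 (volume.restrict (Ioo a b)))
    (hwy : ∀ x ∈ Ioo a b, HasDerivAt (fun t => w t * y t) (h x) x)
    (hz' : ∀ x ∈ Ioo a b, HasDerivAt z (g x) x) :
    ∫ x in a..b, (h x * z x + y x * (w x * g x)) = 0 := by
  have hderiv : ∀ x ∈ Ioo a b, HasDerivAt (fun t => w t * (y t * z t))
      (h x * z x + y x * (w x * g x)) x := fun x hx => by
    have hprod := (hwy x hx).fun_mul (hz' x hx)
    simp only [mul_assoc] at hprod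
    exact hprod.congr_deriv (by ring)
  have hφ : IntervalIntegrable (fun x => h x * z x + y x * (w x * g x)) volume a b := by
    rw [intervalIntegrable_iff_integrableOn_Ioo_of_le hab.le]
    exact (hh.integrable_mul hz).add (hy.integrable_mul hg)
  refine integral_eq_zero_of_hasDerivAt_mul hab hderiv hφ (hy.integrable_mul hz) ?_ ?_
  · simpa [hwa₀] using hwa.hasDerivAt.isBigO_sub.mono nhdsWithin_le_nhds
  · simpa [hwb₀] using hwb.hasDerivAt.isBigO_sub.mono nhdsWithin_le_nhds

theorem integral_deriv_sin_mul_mul_eq_neg {y z h g : ℝ → ℝ}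
    (hy : MemLp y 2 (volume.restrict (Ioo (-π) π)))
    (hz : MemLp z 2 (volume.restrict (Ioo (-π) π)))
    (hhd : ∀ x ∈ Ioo (-π) π, x ≠ 0 → HasDerivAt (fun t => sin t * y t) (h x) x)
    (hh : MemLp h 2 (volume.restrict (Ioo (-π) π)))
    (hgd : ∀ x ∈ Ioo (-π) π, x ≠ 0 → HasDerivAt z (g x) x)
    (hsg : MemLp (fun x => sin x * g x) 2 (volume.restrict (Ioo (-π) π))) :
    ∫ x in (-π)..π, h x * z x = -∫ x in (-π)..π, y x * (sin x * g x) := by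
  have hπ := pi_pos
  have hsub₁ : Ioo (-π) 0 ⊆ Ioo (-π) π := Ioo_subset_Ioo_right hπ.le
  have hsub₂ : Ioo 0 π ⊆ Ioo (-π) π := Ioo_subset_Ioo_left (neg_nonpos.2 hπ.le)
  have hleft : ∫ x in (-π)..0, (h x * z x + y x * (sin x * g x)) = 0 := by
    have hres {f : ℝ → ℝ} (hf : MemLp f 2 (volume.restrict (Ioo (-π) π))) :
        MemLp f 2 (volume.restrict (Ioo (-π) 0)) :=
      hf.mono_measure (Measure.restrict_mono hsub₁ le_rfl)
    exact integral_deriv_mul_add_mul_deriv_eq_zero (neg_lt_zero.2 hπ) differentiableAt_sin (by simp)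
      differentiableAt_sin sin_zero (hres hy) (hres hz) (hres hh) (hres hsg)
      (fun x hx => hhd x (hsub₁ hx) hx.2.ne) (fun x hx => hgd x (hsub₁ hx) hx.2.ne)
  have hright : ∫ x in (0 : ℝ)..π, (h x * z x + y x * (sin x * g x)) = 0 := by
    have hres {f : ℝ → ℝ} (hf : MemLp f 2 (volume.restrict (Ioo (-π) π))) :
        MemLp f 2 (volume.restrict (Ioo 0 π)) :=
      hf.mono_measure (Measure.restrict_mono hsub₂ le_rfl)
    exact integral_deriv_mul_add_mul_deriv_eq_zero hπ differentiableAt_sin sin_zero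
      differentiableAt_sin sin_pi (hres hy) (hres hz) (hres hh) (hres hsg)
      (fun x hx => hhd x (hsub₂ hx) hx.1.ne') (fun x hx => hgd x (hsub₂ hx) hx.1.ne')
  have hIoo {f : ℝ → ℝ} (hf : IntegrableOn f (Ioo (-π) π)) : IntervalIntegrable f volume (-π) π :=
    (intervalIntegrable_iff_integrableOn_Ioo_of_le (by linarith)).2 hf
  have hhz : IntervalIntegrable (fun x => h x * z x) volume (-π) π :=
    hIoo (hh.integrable_mul hz)
  have hysg : IntervalIntegrable (fun x => y x * (sin x * g x)) volume (-π) π :=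
    hIoo (hy.integrable_mul hsg)
  have hmem₀ : (0 : ℝ) ∈ uIcc (-π) π := by rw [uIcc_of_le (by linarith)]; constructor <;> linarith
  have hsum := integral_add_adjacent_intervals
    ((hhz.add hysg).mono_set (uIcc_subset_uIcc left_mem_uIcc hmem₀))
    ((hhz.add hysg).mono_set (uIcc_subset_uIcc hmem₀ right_mem_uIcc))
  rw [hleft, hright, add_zero, integral_add hhz hysg] at hsum
  linarith

theorem stmt_12_general :
    (∀ y : ℝ → ℝ,
      (MemLp y 2 (volume.restrict (Ioo (-π) π)) ∧
        ∃ h : ℝ → ℝ,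
          (∀ x ∈ Ioo (-π) π, x ≠ 0 →
            HasDerivAt (fun t => Real.sin t * y t) (h x) x) ∧
          MemLp h 2 (volume.restrict (Ioo (-π) π))) ↔
      (MemLp y 2 (volume.restrict (Ioo (-π) π)) ∧
        ∃ g : ℝ → ℝ,
          (∀ x ∈ Ioo (-π) π, x ≠ 0 → HasDerivAt y (g x) x) ∧
          MemLp (fun x => Real.sin x * g x) 2 (volume.restrict (Ioo (-π) π)))) ∧
    (∀ y z h g : ℝ → ℝ,
      MemLp y 2 (volume.restrict (Ioo (-π) π)) →
      MemLp z 2 (volume.restrict (Ioo (-π) π)) →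
      (∀ x ∈ Ioo (-π) π, x ≠ 0 →
        HasDerivAt (fun t => Real.sin t * y t) (h x) x) →
      MemLp h 2 (volume.restrict (Ioo (-π) π)) →
      (∀ x ∈ Ioo (-π) π, x ≠ 0 → HasDerivAt z (g x) x) →
      MemLp (fun x => Real.sin x * g x) 2 (volume.restrict (Ioo (-π) π)) →
      (∫ x in (-π)..π, h x * z x) =
        -∫ x in (-π)..π, y x * (Real.sin x * g x)) := by
  refine ⟨fun y => ⟨?_, ?_⟩, fun y z h g => integral_deriv_sin_mul_mul_eq_neg⟩
  · rintro ⟨hy, h, hd, hh⟩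
    exact ⟨hy, exists_hasDerivAt_and_memLp_sin_mul hy hd hh⟩
  · rintro ⟨hy, g, hd, hg⟩
    exact ⟨hy, fun x => cos x * y x + sin x * g x,
      fun x hx hx0 => (hasDerivAt_sin x).fun_mul (hd x hx hx0), (memLp_cos_mul hy).add hg⟩

/-- For `0 < ε < 2`, the operators `A : y ↦ (sin·y)'` and
`B : y ↦ sin·y'` on `L²(-π,π)` (with natural domains, derivatives away from the
zeros of `sin`) have equal domains, and `A* = -B`, expressed by the
integration-by-parts identity `∫ (sin·y)'·z = -∫ y·(sin·z')`. -/
theorem stmt_12 (ε : ℝ) (hε : 0 < ε ∧ ε < 2) :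
    (∀ y : ℝ → ℝ,
      (MemLp y 2 (volume.restrict (Ioo (-π) π)) ∧
        ∃ h : ℝ → ℝ,
          (∀ x ∈ Ioo (-π) π, x ≠ 0 →
            HasDerivAt (fun t => Real.sin t * y t) (h x) x) ∧
          MemLp h 2 (volume.restrict (Ioo (-π) π))) ↔
      (MemLp y 2 (volume.restrict (Ioo (-π) π)) ∧
        ∃ g : ℝ → ℝ,
          (∀ x ∈ Ioo (-π) π, x ≠ 0 → HasDerivAt y (g x) x) ∧
          MemLp (fun x => Real.sin x * g x) 2 (volume.restrict (Ioo (-π) π)))) ∧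
    (∀ y z h g : ℝ → ℝ,
      MemLp y 2 (volume.restrict (Ioo (-π) π)) →
      MemLp z 2 (volume.restrict (Ioo (-π) π)) →
      (∀ x ∈ Ioo (-π) π, x ≠ 0 →
        HasDerivAt (fun t => Real.sin t * y t) (h x) x) →
      MemLp h 2 (volume.restrict (Ioo (-π) π)) →
      (∀ x ∈ Ioo (-π) π, x ≠ 0 → HasDerivAt z (g x) x) →
      MemLp (fun x => Real.sin x * g x) 2 (volume.restrict (Ioo (-π) π)) →
      (∫ x in (-π)..π, h x * z x) =
        -∫ x in (-π)..π, y x * (Real.sin x * g x)) :=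
  stmt_12_general
end
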